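/- arXiv:1803.00726 — 5 statements merged into one kernel-verified Lean document; each statement's English description precedes it below -/
import Mathlib

section
/- Let J_-, J_+ ⊆ ℤ be finite sets each with at least two elements. If the Minkowski sum satisfies |J_- + J_+| < |J_-| + |J_+|, then J_- and J_+ are both arithmetic progressions with the same common difference (and then |J_- + J_+| = |J_-| + |J_+| - 1). -/
/-!
Write `a₀ < a₁` and `b₀ < b₁` for the two smallest elements of `A` and `B`. If `a₀ + b₁` were
not a sum `a + b` with `a ≠ a₀`, then `A + B` would contain `(A \ {a₀}) + B` together with the
two further sums `a₀ + b₀ < a₀ + b₁`, which is too many by Cauchy–Davenport. Hence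
`a₀ + b₁ = a + b₀ ≥ a₁ + b₀`, and by symmetry `a₁ + b₀ = a₀ + b₁`: the first gaps of `A` and `B`
agree. Removing `a₀` keeps `|A + B| < |A| + |B|`, so inductively every gap of `A` equals
`b₁ - b₀`, and symmetrically every gap of `B` equals `a₁ - a₀`.
-/

open scoped Pointwise

/-- The finite arithmetic progression `{a, a+m, ..., a+(k-1)m}` in `ℤ`. -/
def AP (a m : ℤ) (k : ℕ) : Finset ℤ := (Finset.range k).image (fun i : ℕ => a + (i : ℤ) * m)

open Finset

theorem lt_of_mem_erase_of_mem_lowerBounds {α : Type*} [PartialOrder α] [DecidableEq α]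
    {s : Finset α} {a x : α} (ha : a ∈ lowerBounds (s : Set α)) (hx : x ∈ s.erase a) : a < x :=
  lt_of_le_of_ne (ha (mem_of_mem_erase hx)) (ne_of_mem_erase hx).symm

section CriticalPair

variable {α : Type*} [AddCommMonoid α] [LinearOrder α] [IsOrderedCancelAddMonoid α]
  {A B : Finset α} {a₀ a₁ b₀ b₁ : α}

theorem add_notMem_erase_add (ha₀ : a₀ ∈ lowerBounds (A : Set α))
    (hb₀ : b₀ ∈ lowerBounds (B : Set α)) : a₀ + b₀ ∉ A.erase a₀ + B := by
  intro h
  obtain ⟨a, ha, b, hb, hab⟩ := mem_add.mp h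
  exact (add_lt_add_of_lt_of_le (lt_of_mem_erase_of_mem_lowerBounds ha₀ ha) (hb₀ hb)).ne' hab

theorem card_erase_add_lt (hAB : #(A + B) < #A + #B) (ha₀ : IsLeast (A : Set α) a₀)
    (hb₀ : IsLeast (B : Set α) b₀) : #(A.erase a₀ + B) < #(A.erase a₀) + #B := by
  have hlt : #(A.erase a₀ + B) < #(A + B) := card_lt_card <|
    (ssubset_iff_of_subset (add_subset_add_right (erase_subset _ _))).mpr
      ⟨a₀ + b₀, add_mem_add ha₀.1 hb₀.1, add_notMem_erase_add ha₀.2 hb₀.2⟩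
  rw [card_erase_of_mem (mem_coe.mp ha₀.1)]
  have := card_pos.mpr ⟨a₀, ha₀.1⟩
  omega

theorem add_mem_erase_add_of_card_add_lt (hAB : #(A + B) < #A + #B)
    (ha₀ : IsLeast (A : Set α) a₀) (hA : (A.erase a₀).Nonempty) (hb₀ : IsLeast (B : Set α) b₀)
    (hb₁ : b₁ ∈ B.erase b₀) : a₀ + b₁ ∈ A.erase a₀ + B := by
  by_contra hnot
  have hne : a₀ + b₀ ≠ a₀ + b₁ :=
    (add_lt_add_right (lt_of_mem_erase_of_mem_lowerBounds hb₀.2 hb₁) a₀).ne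
  have hsub : insert (a₀ + b₀) (insert (a₀ + b₁) (A.erase a₀ + B)) ⊆ A + B :=
    insert_subset (add_mem_add ha₀.1 hb₀.1) <|
      insert_subset (add_mem_add ha₀.1 (mem_of_mem_erase hb₁)) <|
        add_subset_add_right (erase_subset _ _)
  have hcard := card_le_card hsub
  rw [card_insert_of_notMem (by simp [hne, add_notMem_erase_add ha₀.2 hb₀.2]),
    card_insert_of_notMem hnot] at hcard
  have hCD := cauchy_davenport_add_of_linearOrder_isCancelAdd hA ⟨b₀, hb₀.1⟩
  rw [card_erase_of_mem (mem_coe.mp ha₀.1)] at hCD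
  have := card_pos.mpr ⟨b₀, hb₀.1⟩
  omega

theorem add_le_add_of_card_add_lt (hAB : #(A + B) < #A + #B) (ha₀ : IsLeast (A : Set α) a₀)
    (ha₁ : IsLeast (A.erase a₀ : Set α) a₁) (hb₀ : IsLeast (B : Set α) b₀)
    (hb₁ : IsLeast (B.erase b₀ : Set α) b₁) : a₁ + b₀ ≤ a₀ + b₁ := by
  obtain ⟨a, ha, b, hb, hab⟩ :=
    mem_add.mp (add_mem_erase_add_of_card_add_lt hAB ha₀ ⟨a₁, ha₁.1⟩ hb₀ hb₁.1)
  rcases eq_or_ne b b₀ with rfl | hne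
  · rw [← hab]
    exact add_le_add_left (ha₁.2 ha) b
  · have hlt : a₀ + b₁ < a + b := add_lt_add_of_lt_of_le
      (lt_of_mem_erase_of_mem_lowerBounds ha₀.2 ha) (hb₁.2 (mem_erase.mpr ⟨hne, hb⟩))
    exact absurd hab hlt.ne'

theorem add_eq_add_of_card_add_lt (hAB : #(A + B) < #A + #B) (ha₀ : IsLeast (A : Set α) a₀)
    (ha₁ : IsLeast (A.erase a₀ : Set α) a₁) (hb₀ : IsLeast (B : Set α) b₀)
    (hb₁ : IsLeast (B.erase b₀ : Set α) b₁) : a₁ + b₀ = a₀ + b₁ := by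
  have hBA : #(B + A) < #B + #A := by rwa [add_comm B, add_comm #B]
  have := add_le_add_of_card_add_lt hBA hb₀ hb₁ ha₀ ha₁
  rw [add_comm b₁, add_comm b₀] at this
  exact le_antisymm (add_le_add_of_card_add_lt hAB ha₀ ha₁ hb₀ hb₁) this

end CriticalPair

theorem AP_succ (a m : ℤ) (k : ℕ) : AP a m (k + 1) = insert a (AP (a + m) m k) := by
  rw [AP, range_add_one', image_insert, map_eq_image, image_image, AP]
  congr 2
  · simp
  · funext i
    change a + ((i + 1 : ℕ) : ℤ) * m = a + m + i * m
    push_cast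
    ring

theorem eq_AP_of_card_add_lt {A B : Finset ℤ} {a₀ b₀ b₁ : ℤ} (hAB : #(A + B) < #A + #B)
    (ha₀ : IsLeast (A : Set ℤ) a₀) (hb₀ : IsLeast (B : Set ℤ) b₀)
    (hb₁ : IsLeast (B.erase b₀ : Set ℤ) b₁) : A = AP a₀ (b₁ - b₀) #A := by
  induction hn : #A generalizing A a₀ with
  | zero => exact absurd hn (card_pos.mpr ⟨a₀, ha₀.1⟩).ne'
  | succ n ih =>
    rcases (A.erase a₀).eq_empty_or_nonempty with hA' | hA'
    · have hA : A = {a₀} := by rw [← insert_erase (mem_coe.mp ha₀.1), hA', insert_empty]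
      subst hA
      obtain rfl : n = 0 := by simpa [eq_comm] using hn
      simp [AP]
    · have ha₁ := isLeast_min' _ hA'
      have hgap := add_eq_add_of_card_add_lt hAB ha₀ ha₁ hb₀ hb₁
      have hrest := ih (card_erase_add_lt hAB ha₀ hb₀) ha₁
        (by rw [card_erase_of_mem (mem_coe.mp ha₀.1), hn]; rfl)
      rw [AP_succ, show a₀ + (b₁ - b₀) = (A.erase a₀).min' hA' by linarith, ← hrest,
        insert_erase (mem_coe.mp ha₀.1)]

/-- If two finite sets of integers, each with at least two elements, have Minkowski sum of
cardinality less than `|J₋| + |J₊|`, then both are arithmetic progressions with the same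
common difference, and the Minkowski sum has cardinality exactly `|J₋| + |J₊| - 1`. -/
theorem freiman_type_arithmetic_progressions (J₁ J₂ : Finset ℤ)
    (h1 : 2 ≤ J₁.card) (h2 : 2 ≤ J₂.card)
    (h : (J₁ + J₂).card < J₁.card + J₂.card) :
    ∃ m : ℤ, 0 < m ∧ (∃ a, J₁ = AP a m J₁.card) ∧ (∃ b, J₂ = AP b m J₂.card) ∧
      (J₁ + J₂).card = J₁.card + J₂.card - 1 := by
  obtain ⟨a₀, ha₀⟩ : ∃ a₀, IsLeast (J₁ : Set ℤ) a₀ := ⟨_, isLeast_min' _ (card_pos.mp (by omega))⟩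
  obtain ⟨b₀, hb₀⟩ : ∃ b₀, IsLeast (J₂ : Set ℤ) b₀ := ⟨_, isLeast_min' _ (card_pos.mp (by omega))⟩
  have hJ₁' : (J₁.erase a₀).Nonempty := card_pos.mp (by rw [card_erase_of_mem ha₀.1]; omega)
  have hJ₂' : (J₂.erase b₀).Nonempty := card_pos.mp (by rw [card_erase_of_mem hb₀.1]; omega)
  obtain ⟨a₁, ha₁⟩ : ∃ a₁, IsLeast (J₁.erase a₀ : Set ℤ) a₁ := ⟨_, isLeast_min' _ hJ₁'⟩
  obtain ⟨b₁, hb₁⟩ : ∃ b₁, IsLeast (J₂.erase b₀ : Set ℤ) b₁ := ⟨_, isLeast_min' _ hJ₂'⟩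
  have hgap : a₁ + b₀ = a₀ + b₁ := add_eq_add_of_card_add_lt h ha₀ ha₁ hb₀ hb₁
  have h' : #(J₂ + J₁) < #J₂ + #J₁ := by rwa [add_comm J₂, add_comm #J₂]
  have hJ₂ := eq_AP_of_card_add_lt h' hb₀ ha₀ ha₁
  have hCD := cauchy_davenport_add_of_linearOrder_isCancelAdd ⟨a₀, ha₀.1⟩ ⟨b₀, hb₀.1⟩
  refine ⟨b₁ - b₀, sub_pos.mpr (lt_of_mem_erase_of_mem_lowerBounds hb₀.2 hb₁.1),
    ⟨a₀, eq_AP_of_card_add_lt h ha₀ hb₀ hb₁⟩, ⟨b₀, by rwa [show a₁ - a₀ = b₁ - b₀ by linarith] at hJ₂⟩, by omega⟩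
end

section
/- For finite nonempty sets A, B ⊆ ℤ, the Minkowski sum satisfies |A + B| ≥ |A| + |B| - 1, with equality if and only if A and B are arithmetic progressions with the same common difference, or one of them is a singleton. -/
/-!
Let `rank s x` be the number of elements of `s` below `x`. For `x ∈ A`, `y ∈ B`, the sumset
`A + B` has at least `rank A x + rank B y` elements below `x + y` (namely `a + min B` with
`a < x` and `x + b` with `b < y`), and symmetrically above it. Hence if `|A + B| = |A| + |B| - 1`,
then `rank (A + B) (x + y) = rank A x + rank B y` for all `x ∈ A`, `y ∈ B`.
Since the rank is injective on `A + B`, sums with the same rank coincide; comparing `x + y₀` with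
`x' + y₁`, where `x'` and `x` have consecutive ranks in `A` and `y₀ < y₁` are the two smallest
elements of `B`, shows that consecutive elements of `A` differ by `y₁ - y₀`, and symmetrically
for `B`.
-/

open scoped Pointwise

open Finset

namespace Finset

section LinearOrder

variable {α : Type*} [LinearOrder α] {s : Finset α} {x y : α}

def rank (s : Finset α) (x : α) : ℕ := #{a ∈ s | a < x}

lemma rank_strictMonoOn : StrictMonoOn s.rank s := by
  intro x hx y _ hxy
  refine card_lt_card <| (ssubset_iff_of_subset ?_).2 ⟨x, mem_filter.2 ⟨hx, hxy⟩, by simp⟩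
  intro a
  simp only [mem_filter]
  exact fun ⟨ha, hax⟩ => ⟨ha, hax.trans hxy⟩

lemma rank_lt_card (hx : x ∈ s) : s.rank x < #s :=
  card_lt_card <| filter_ssubset.2 ⟨x, hx, lt_irrefl x⟩

lemma exists_rank_eq {i : ℕ} (hi : i < #s) : ∃ x ∈ s, s.rank x = i := by
  obtain ⟨x, hx, hxi⟩ := surjOn_of_injOn_of_card_le s.rank
    (fun x hx => mem_range.2 (rank_lt_card hx)) rank_strictMonoOn.injOn (by simp) (mem_range.2 hi)
  exact ⟨x, hx, hxi⟩

lemma rank_add_card_filter_gt (hx : x ∈ s) : s.rank x + #{a ∈ s | x < a} + 1 = #s := by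
  have hge : {a ∈ s | ¬a < x} = insert x {a ∈ s | x < a} := by
    ext a
    simp only [mem_filter, mem_insert, not_lt, le_iff_eq_or_lt]
    grind
  rw [rank, ← card_filter_add_card_filter_not (s := s) (· < x), hge,
    card_insert_of_notMem (by simp)]
  omega

end LinearOrder

section Sumset

variable {α : Type*} [LinearOrder α] [Add α] [IsCancelAdd α] [AddLeftMono α] [AddRightMono α]
  [DecidableEq α] {A B : Finset α} {x y : α}

lemma rank_add_rank_le_rank_add (hx : x ∈ A) (hy : y ∈ B) :
    A.rank x + B.rank y ≤ (A + B).rank (x + y) := by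
  have hB : B.Nonempty := ⟨y, hy⟩
  have hdisj : Disjoint ({a ∈ A | a < x} + {B.min' hB}) ({x} + {b ∈ B | b < y}) := by
    simp only [disjoint_left, mem_add, mem_singleton, mem_filter, exists_eq_left]
    rintro _ ⟨a, ⟨-, hax⟩, rfl⟩ ⟨b, ⟨hb, -⟩, hab⟩
    exact (add_lt_add_of_lt_of_le hax (B.min'_le b hb)).ne' hab
  calc A.rank x + B.rank y = #({a ∈ A | a < x} + {B.min' hB} ∪ ({x} + {b ∈ B | b < y})) := by
        rw [card_union_of_disjoint hdisj, card_add_singleton, card_singleton_add]; rfl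
    _ ≤ _ := by
      refine card_le_card <| union_subset ?_ ?_ <;>
        simp only [subset_iff, mem_add, mem_singleton, mem_filter, exists_eq_left]
      · rintro _ ⟨a, ⟨ha, hax⟩, rfl⟩
        exact ⟨⟨a, ha, _, min'_mem B hB, rfl⟩, add_lt_add_of_lt_of_le hax (B.min'_le y hy)⟩
      · rintro _ ⟨b, ⟨hb, hby⟩, rfl⟩
        exact ⟨⟨x, hx, b, hb, rfl⟩, add_lt_add_of_le_of_lt le_rfl hby⟩

lemma rank_add_eq_of_card_add_eq (hcard : #(A + B) + 1 = #A + #B) (hx : x ∈ A) (hy : y ∈ B) :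
    (A + B).rank (x + y) = A.rank x + B.rank y := by
  have hlt := rank_add_rank_le_rank_add hx hy
  -- the lower bound in the order dual counts the elements above
  have hgt : #{a ∈ A | x < a} + #{b ∈ B | y < b} ≤ #{c ∈ A + B | x + y < c} :=
    rank_add_rank_le_rank_add (α := αᵒᵈ) hx hy
  have hA := rank_add_card_filter_gt hx
  have hB := rank_add_card_filter_gt hy
  have hAB := rank_add_card_filter_gt (add_mem_add hx hy)
  omega

end Sumset

lemma eq_add_rank_nsmul_of_rank_add {α : Type*} [AddCommGroup α] [LinearOrder α]
    {A B : Finset α} {x₀ y₀ y₁ : α}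
    (hrank : ∀ x ∈ A, ∀ y ∈ B, (A + B).rank (x + y) = A.rank x + B.rank y)
    (hx₀ : x₀ ∈ A) (h₀ : A.rank x₀ = 0) (hy₀ : y₀ ∈ B) (hy₁ : y₁ ∈ B)
    (h₀₁ : B.rank y₁ = B.rank y₀ + 1) :
    ∀ x ∈ A, x = x₀ + A.rank x • (y₁ - y₀) := by
  suffices ∀ i, ∀ x ∈ A, A.rank x = i → x = x₀ + i • (y₁ - y₀) from fun x hx => this _ x hx rfl
  intro i
  induction i with
  | zero =>
    intro x hx hx0
    simpa using rank_strictMonoOn.injOn hx hx₀ (hx0.trans h₀.symm)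
  | succ i ih =>
    intro x hx hxi
    obtain ⟨x', hx', hx'i⟩ := exists_rank_eq (s := A) (i := i) (by have := rank_lt_card hx; omega)
    have hsum : x + y₀ = x' + y₁ := rank_strictMonoOn.injOn (add_mem_add hx hy₀)
      (add_mem_add hx' hy₁) (by rw [hrank x hx y₀ hy₀, hrank x' hx' y₁ hy₁]; omega)
    rw [eq_sub_of_add_eq hsum, ih x' hx' hx'i, succ_nsmul]
    abel

end Finset

lemma mem_AP {a m x : ℤ} {k : ℕ} : x ∈ AP a m k ↔ ∃ i < k, a + i * m = x := by
  simp [AP]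

lemma card_AP {m : ℤ} (hm : m ≠ 0) (a : ℤ) (k : ℕ) : #(AP a m k) = k := by
  rw [AP, card_image_of_injective _ fun i j h => by simpa [hm] using h, card_range]

lemma AP_add_AP (a b m : ℤ) {k l : ℕ} (hk : 1 ≤ k) (hl : 1 ≤ l) :
    AP a m k + AP b m l = AP (a + b) m (k + l - 1) := by
  ext x
  simp only [mem_add, mem_AP]
  constructor
  · rintro ⟨_, ⟨i, hi, rfl⟩, _, ⟨j, hj, rfl⟩, rfl⟩
    exact ⟨i + j, by omega, by push_cast; ring⟩
  · rintro ⟨t, ht, rfl⟩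
    refine ⟨_, ⟨min t (k - 1), by omega, rfl⟩, _, ⟨t - min t (k - 1), by omega, rfl⟩, ?_⟩
    rw [Nat.cast_sub (min_le_left _ _)]
    ring

lemma eq_AP_of_forall_eq_add_rank_mul {s : Finset ℤ} {a m : ℤ} (hm : m ≠ 0)
    (h : ∀ x ∈ s, x = a + s.rank x * m) : s = AP a m #s :=
  eq_of_subset_of_card_le (fun x hx => mem_AP.2 ⟨_, rank_lt_card hx, (h x hx).symm⟩)
    (card_AP hm a _).le

lemma exists_AP_of_card_add_eq {A B : Finset ℤ} (hcard : #(A + B) + 1 = #A + #B)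
    (hA : 2 ≤ #A) (hB : 2 ≤ #B) :
    ∃ m : ℤ, 0 < m ∧ (∃ a, A = AP a m #A) ∧ ∃ b, B = AP b m #B := by
  have hrank := fun x (hx : x ∈ A) y (hy : y ∈ B) => rank_add_eq_of_card_add_eq hcard hx hy
  obtain ⟨x₀, hx₀, hx₀r⟩ := exists_rank_eq (s := A) (i := 0) (by omega)
  obtain ⟨x₁, hx₁, hx₁r⟩ := exists_rank_eq (s := A) (i := 1) (by omega)
  obtain ⟨y₀, hy₀, hy₀r⟩ := exists_rank_eq (s := B) (i := 0) (by omega)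
  obtain ⟨y₁, hy₁, hy₁r⟩ := exists_rank_eq (s := B) (i := 1) (by omega)
  have hAeq := eq_add_rank_nsmul_of_rank_add hrank hx₀ hx₀r hy₀ hy₁ (by omega)
  have hBeq := eq_add_rank_nsmul_of_rank_add (A := B) (B := A)
    (fun y hy x hx => by rw [add_comm B, add_comm y, hrank x hx y hy, add_comm])
    hy₀ hy₀r hx₀ hx₁ (by omega)
  have hm : x₁ - x₀ = y₁ - y₀ := by
    have := hAeq x₁ hx₁
    rw [hx₁r, one_nsmul] at this
    linarith
  have hpos : y₀ < y₁ := (rank_strictMonoOn.lt_iff_lt hy₀ hy₁).1 (by omega)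
  simp only [nsmul_eq_mul] at hAeq hBeq
  rw [hm] at hBeq
  exact ⟨y₁ - y₀, sub_pos.2 hpos, ⟨x₀, eq_AP_of_forall_eq_add_rank_mul (by linarith) hAeq⟩,
    ⟨y₀, eq_AP_of_forall_eq_add_rank_mul (by linarith) hBeq⟩⟩

/-- For finite nonempty sets of integers, `|A + B| ≥ |A| + |B| - 1`, with equality iff
`A` and `B` are arithmetic progressions with the same common difference or one of them
is a singleton. -/
theorem minkowski_sum_lower_bound_and_equality (A B : Finset ℤ)
    (hA : A.Nonempty) (hB : B.Nonempty) :
    A.card + B.card - 1 ≤ (A + B).card ∧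
    ((A + B).card = A.card + B.card - 1 ↔
      (∃ m : ℤ, 0 < m ∧ (∃ a, A = AP a m A.card) ∧ (∃ b, B = AP b m B.card))
      ∨ A.card = 1 ∨ B.card = 1) := by
  have hA₁ := hA.card_pos
  have hB₁ := hB.card_pos
  refine ⟨cauchy_davenport_add_of_linearOrder_isCancelAdd hA hB, fun hcard => ?_, ?_⟩
  · by_cases hA₂ : #A = 1
    · exact Or.inr (Or.inl hA₂)
    by_cases hB₂ : #B = 1
    · exact Or.inr (Or.inr hB₂)
    exact Or.inl (exists_AP_of_card_add_eq (by omega) (by omega) (by omega))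
  · rintro (⟨m, hm, ⟨a, hAa⟩, ⟨b, hBb⟩⟩ | hA₂ | hB₂)
    · calc #(A + B) = #(AP a m #A + AP b m #B) := by rw [← hAa, ← hBb]
        _ = #A + #B - 1 := by rw [AP_add_AP a b m hA₁ hB₁, card_AP hm.ne']
    · obtain ⟨x, rfl⟩ := card_eq_one.1 hA₂
      rw [card_singleton_add, card_singleton]
      omega
    · obtain ⟨y, rfl⟩ := card_eq_one.1 hB₂
      rw [card_add_singleton, card_singleton]
      omega
end

section
/- Let D = D_- + D_+ be a difference operator annihilating a bi-infinite vector V (i.e. DV = 0), and let D̃ = D̃_- + D̃_+ satisfy the refactorization relation D̃_+ D_- = D̃_- D_+. Then the vector Ṽ := D_+ V satisfies D̃ Ṽ = 0. -/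
/-- If `D = D₋ + D₊` annihilates the bi-infinite vector `V` and the refactorization
relation `D̃₊ D₋ = D̃₋ D₊` holds, then `D̃ = D̃₋ + D̃₊` annihilates `Ṽ := D₊ V`. -/
theorem refactorization_annihilates (W : Type*) [AddCommGroup W] [Module ℝ W]
    (Dm Dp Dm' Dp' : Module.End ℝ (ℤ → W)) (V : ℤ → W)
    (hV : (Dm + Dp) V = 0) (hrefac : Dp' * Dm = Dm' * Dp) :
    (Dm' + Dp') (Dp V) = 0 := by
  have h1 : Dm' (Dp V) = Dp' (Dm V) := by
    have := congrArg (fun f => f V) hrefac.symm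
    simpa [Module.End.mul_apply] using this
  have h2 : Dm V + Dp V = 0 := by simpa using hV
  calc (Dm' + Dp') (Dp V) = Dp' (Dm V) + Dp' (Dp V) := by
        simp [LinearMap.add_apply, h1]
    _ = Dp' (Dm V + Dp V) := by rw [map_add]
    _ = 0 := by rw [h2, map_zero]
end

section
/- Let J ⊆ ℤ be finite with d := max(J) - min(J) - 1 ≥ 1, and let {V_i}_{i∈ℤ} be vectors in ℝ^{d+1} such that for each i the vectors {V_{i+j} : j ∈ J} satisfy a nontrivial linear relation Σ_{j∈J} a^(j)_i V_{i+j} = 0 with all coefficients a^(j)_i nonzero. Suppose J = J_- ⊔ J_+ is a partition with |J_-|, |J_+| ≥ 1 and that for each i the families {V_{i+j} : j ∈ J_-} and {V_{i+j} : j ∈ J_+} are each linearly independent. Then for each i, the subspace span{V_{i+j} : j ∈ J_-} ∩ span{V_{i+j} : j ∈ J_+} has dimension exactly 1. -/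
/-!
A circuit — a family satisfying a linear relation with a nonzero coefficient at `j₀` and
independent once `j₀` is removed — spans a space of dimension one less than its size. Splitting
it into two independent parts of sizes `p` and `q` (with `p + q` the size of the circuit), the
dimension formula `dim (U ⊔ W) + dim (U ⊓ W) = dim U + dim W` gives
`dim (U ⊓ W) = p + q - (p + q - 1) = 1`.
-/

open Module Submodule

variable {K M ι : Type*} [DivisionRing K] [AddCommGroup M] [Module K M]

theorem LinearIndepOn.finrank_span_image {f : ι → M} {s : Finset ι}
    (h : LinearIndepOn K f (s : Set ι)) : finrank K (span K (f '' s)) = s.card := by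
  rw [Set.image_eq_range, finrank_span_eq_card h]
  exact Fintype.card_coe s

section Circuit

variable [DecidableEq ι] {f : ι → M} {s : Finset ι} {c : ι → K} {j₀ : ι}

theorem span_image_erase_eq_of_sum_smul_eq_zero (hrel : ∑ j ∈ s, c j • f j = 0)
    (hj₀ : j₀ ∈ s) (hc : c j₀ ≠ 0) : span K (f '' ↑(s.erase j₀)) = span K (f '' s) := by
  have hmem : f j₀ ∈ span K (f '' ↑(s.erase j₀)) := by
    have hsolve : c j₀ • f j₀ = -∑ j ∈ s.erase j₀, c j • f j :=
      eq_neg_of_add_eq_zero_left ((Finset.add_sum_erase s _ hj₀).trans hrel)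
    rw [← inv_smul_smul₀ hc (f j₀), hsolve]
    exact smul_mem _ _ (neg_mem (sum_mem fun j hj => smul_mem _ _ (subset_span ⟨j, hj, rfl⟩)))
  rw [← span_insert_eq_span hmem, ← Set.image_insert_eq, Finset.coe_erase,
    Set.insert_sdiff_singleton, Set.insert_eq_of_mem (Finset.mem_coe.mpr hj₀)]

theorem finrank_span_image_of_sum_smul_eq_zero (hrel : ∑ j ∈ s, c j • f j = 0)
    (hj₀ : j₀ ∈ s) (hc : c j₀ ≠ 0) (hind : LinearIndepOn K f ↑(s.erase j₀)) :
    finrank K (span K (f '' s)) = s.card - 1 := by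
  rw [← span_image_erase_eq_of_sum_smul_eq_zero hrel hj₀ hc, hind.finrank_span_image,
    Finset.card_erase_of_mem hj₀]

theorem finrank_inf_span_image_eq_one {t : Finset ι} (hst : Disjoint s t)
    (hs : LinearIndepOn K f s) (ht : LinearIndepOn K f t)
    (hrel : ∑ j ∈ s ∪ t, c j • f j = 0) (hj₀ : j₀ ∈ s ∪ t) (hc : c j₀ ≠ 0)
    (hind : LinearIndepOn K f ↑((s ∪ t).erase j₀)) :
    finrank K ↥(span K (f '' s) ⊓ span K (f '' t)) = 1 := by
  have hsup : span K (f '' s) ⊔ span K (f '' t) = span K (f '' ↑(s ∪ t)) := by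
    rw [← span_union, ← Set.image_union, Finset.coe_union]
  have := FiniteDimensional.span_of_finite K (s.finite_toSet.image f)
  have := FiniteDimensional.span_of_finite K (t.finite_toSet.image f)
  have hdim := finrank_sup_add_finrank_inf_eq (span K (f '' s)) (span K (f '' t))
  rw [hsup, finrank_span_image_of_sum_smul_eq_zero hrel hj₀ hc hind, hs.finrank_span_image,
    ht.finrank_span_image, Finset.card_union_of_disjoint hst] at hdim
  have hpos : 0 < (s ∪ t).card := Finset.card_pos.mpr ⟨j₀, hj₀⟩
  rw [Finset.card_union_of_disjoint hst] at hpos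
  omega

end Circuit

theorem Finset.ne_union_of_disjoint {α : Type*} [DecidableEq α] {s t : Finset α}
    (hst : Disjoint s t) (ht : t.Nonempty) : s ≠ s ∪ t := fun h =>
  ht.ne_empty (hst.symm.eq_bot_of_le (Finset.union_eq_left.mp h.symm))

theorem pentagram_intersection_dim_one_general (J Jm Jp : Finset ℤ)
    (d : ℕ)
    (V : ℤ → (Fin (d + 1) → ℝ)) (a : ℤ → ℤ → ℝ)
    (hrel : ∀ i : ℤ, ∑ j ∈ J, a j i • V (i + j) = 0)
    (hnz : ∀ j ∈ J, ∀ i : ℤ, a j i ≠ 0)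
    (hpart : Jm ∪ Jp = J) (hdisj : Disjoint Jm Jp)
    (hm : Jm.Nonempty) (hp : Jp.Nonempty)
    (hind : ∀ K : Finset ℤ, K ⊆ J → K ≠ J → ∀ i : ℤ,
      LinearIndependent ℝ (fun j : ↥K => V (i + (j : ℤ)))) :
    ∀ i : ℤ, Module.finrank ℝ
      ↥(Submodule.span ℝ ((fun j : ℤ => V (i + j)) '' (Jm : Set ℤ)) ⊓
        Submodule.span ℝ ((fun j : ℤ => V (i + j)) '' (Jp : Set ℤ))) = 1 := by
  intro i
  subst hpart
  obtain ⟨j₀, hj₀⟩ := hm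
  have hj₀J : j₀ ∈ Jm ∪ Jp := Finset.mem_union_left _ hj₀
  refine finrank_inf_span_image_eq_one hdisj ?_ ?_ (hrel i) hj₀J (hnz j₀ hj₀J i) ?_
  · exact hind Jm Finset.subset_union_left (Finset.ne_union_of_disjoint hdisj hp) i
  · refine hind Jp Finset.subset_union_right ?_ i
    rw [Finset.union_comm]
    exact Finset.ne_union_of_disjoint hdisj.symm ⟨j₀, hj₀⟩
  · exact hind _ (Finset.erase_subset _ _) (Finset.erase_ne_self.mpr hj₀J) i

/-- Well-definedness of the pentagram map associated to a partition `J = J₋ ⊔ J₊`: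
if the vectors `{V_{i+j} : j ∈ J}` in `ℝ^{d+1}` (with `d = max J - min J - 1`) satisfy a
linear relation with all coefficients nonzero, and every proper subfamily is linearly
independent (in particular the `J₋`- and `J₊`-subfamilies are), then
`span{V_{i+j} : j ∈ J₋} ∩ span{V_{i+j} : j ∈ J₊}` is one-dimensional. -/
theorem pentagram_intersection_dim_one (J Jm Jp : Finset ℤ) (hJ : J.Nonempty)
    (d : ℕ) (hd : 1 ≤ d) (hdval : (J.max' hJ - J.min' hJ - 1 : ℤ) = d)
    (V : ℤ → (Fin (d + 1) → ℝ)) (a : ℤ → ℤ → ℝ)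
    (hrel : ∀ i : ℤ, ∑ j ∈ J, a j i • V (i + j) = 0)
    (hnz : ∀ j ∈ J, ∀ i : ℤ, a j i ≠ 0)
    (hpart : Jm ∪ Jp = J) (hdisj : Disjoint Jm Jp)
    (hm : Jm.Nonempty) (hp : Jp.Nonempty)
    (hind : ∀ K : Finset ℤ, K ⊆ J → K ≠ J → ∀ i : ℤ,
      LinearIndependent ℝ (fun j : ↥K => V (i + (j : ℤ)))) :
    ∀ i : ℤ, Module.finrank ℝ
      ↥(Submodule.span ℝ ((fun j : ℤ => V (i + j)) '' (Jm : Set ℤ)) ⊓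
        Submodule.span ℝ ((fun j : ℤ => V (i + j)) '' (Jp : Set ℤ))) = 1 :=
  pentagram_intersection_dim_one_general J Jm Jp d V a hrel hnz hpart hdisj hm hp hind
end

section
/- Let n, k ≥ 1 with gcd(n, k) = g. Then the subalgebra DO_n(kℤ) of n-periodic difference operators supported in multiples of k (i.e. finite sums Σ_j a^(j) T^{kj} with n-periodic coefficients) is isomorphic as an associative algebra to the g-fold direct product of the algebra DO_{n/g} of (n/g)-periodic difference operators; in particular, if gcd(n,k) = 1, then DO_n(kℤ) ≅ DO_n. -/
/-- The shift operator by `j` on bi-infinite real sequences: `(shiftZ j v) i = v (i + j)`.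
In particular `shiftZ 1` is the left shift `T`. -/
def shiftZ (j : ℤ) : Module.End ℝ (ℤ → ℝ) where
  toFun v := fun i => v (i + j)
  map_add' _ _ := rfl
  map_smul' _ _ := rfl

/-- The scalar operator associated with a sequence `a`: `(scalOp a v) i = a i * v i`. -/
def scalOp (a : ℤ → ℝ) : Module.End ℝ (ℤ → ℝ) where
  toFun v := fun i => a i * v i
  map_add' u v := by funext i; simp [mul_add]
  map_smul' c v := by funext i; simp [smul_eq_mul]; ring

/-- The algebra `DO_n(kℤ)` of `n`-periodic difference operators supported in multiples
of `k`: the algebra generated by `n`-periodic scalar operators together with `T^k` and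
`T^(-k)` (its elements are the finite sums `Σ_j a⁽ʲ⁾ T^{kj}` with `n`-periodic
coefficients). In particular `DOk n 1` is the full algebra `DO_n`. -/
noncomputable def DOk (n k : ℕ) : Subalgebra ℝ (Module.End ℝ (ℤ → ℝ)) :=
  Algebra.adjoin ℝ
    ({E | ∃ a : ℤ → ℝ, (∀ i : ℤ, a (i + n) = a i) ∧ E = scalOp a} ∪
      {shiftZ k, shiftZ (-k)})

/-!
Compressing an operator `E` to the coset `r + kℤ`, reindexed by `i ↦ k * i + r`, gives
`π_r E ι_r` (restrict, then extend by zero). Elements of `DO_n(kℤ)` commute with the coset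
projections `ι_r π_r`, so each compression is an algebra homomorphism; it sends `T^k ↦ T` and
`a ↦ a(k · + r)`, hence lands in `DO_{n/g}`, and `E` is recovered from its compressions at all
cosets. As `E` commutes with `T^n`, the compression at `r + n` equals the one at `r`, and the
one at `r + k s` is its conjugate by `T^s`; since `nℤ + kℤ = gℤ`, the compressions at
`r = 0, …, g - 1` already determine `E`. For surjectivity, the indicator of `ρ + gℤ` is
`n`-periodic and yields the idempotents of the product, and by Bézout every `n/g`-periodic `b`
is `c(k · + ρ)` for some `n`-periodic `c`.
-/

open Function

@[simp] lemma shiftZ_apply (j : ℤ) (v : ℤ → ℝ) (i : ℤ) : shiftZ j v i = v (i + j) := rfl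

@[simp] lemma scalOp_apply (a v : ℤ → ℝ) (i : ℤ) : scalOp a v i = a i * v i := rfl

lemma shiftZ_add (a b : ℤ) : shiftZ (a + b) = shiftZ a * shiftZ b :=
  LinearMap.ext fun v => funext fun i => by simp [add_assoc]

lemma shiftZ_mul_shiftZ_neg (j : ℤ) : shiftZ j * shiftZ (-j) = 1 :=
  LinearMap.ext fun v => funext fun i => by simp

lemma commute_shiftZ_shiftZ (a b : ℤ) : Commute (shiftZ a) (shiftZ b) := by
  rw [Commute, SemiconjBy, ← shiftZ_add, ← shiftZ_add, add_comm]

lemma scalOp_const (c : ℝ) : scalOp (fun _ => c) = algebraMap ℝ _ c :=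
  LinearMap.ext fun v => funext fun i => by simp [Algebra.algebraMap_eq_smul_one]

lemma commute_scalOp_shiftZ {a : ℤ → ℝ} {p : ℤ} (ha : Periodic a p) :
    Commute (scalOp a) (shiftZ p) :=
  LinearMap.ext fun v => funext fun i => by simp [ha i]

section Coset

variable (k r : ℤ)

def cosetRestrict : Module.End ℝ (ℤ → ℝ) := LinearMap.funLeft ℝ ℝ (fun i => k * i + r)

noncomputable def cosetExtend : Module.End ℝ (ℤ → ℝ) :=
  ExtendByZero.linearMap ℝ (fun i => k * i + r)

noncomputable def cosetProj : Module.End ℝ (ℤ → ℝ) := cosetExtend k r * cosetRestrict k r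

noncomputable def compress : Module.End ℝ (ℤ → ℝ) →ₗ[ℝ] Module.End ℝ (ℤ → ℝ) :=
  LinearMap.mulLeft ℝ (cosetRestrict k r) ∘ₗ LinearMap.mulRight ℝ (cosetExtend k r)

variable {k r}

lemma compress_apply (E : Module.End ℝ (ℤ → ℝ)) :
    compress k r E = cosetRestrict k r * E * cosetExtend k r :=
  (mul_assoc _ _ _).symm

@[simp] lemma cosetRestrict_apply (v : ℤ → ℝ) (i : ℤ) : cosetRestrict k r v i = v (k * i + r) :=
  rfl

lemma cosetExtend_apply_mul_add (hk : k ≠ 0) (v : ℤ → ℝ) (a : ℤ) :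
    cosetExtend k r v (k * a + r) = v a :=
  ((add_left_injective r).comp (mul_right_injective₀ hk)).extend_apply v 0 a

lemma cosetExtend_apply_of_not_dvd (v : ℤ → ℝ) {i : ℤ} (h : ¬ k ∣ i - r) :
    cosetExtend k r v i = 0 :=
  extend_apply' _ _ _ fun ⟨a, ha⟩ => h ⟨a, by rw [← ha]; ring⟩

lemma cosetRestrict_mul_cosetExtend (hk : k ≠ 0) : cosetRestrict k r * cosetExtend k r = 1 :=
  LinearMap.ext fun v => funext fun i => cosetExtend_apply_mul_add hk v i

lemma cosetProj_apply (hk : k ≠ 0) (v : ℤ → ℝ) (i : ℤ) :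
    cosetProj k r v i = if k ∣ i - r then v i else 0 := by
  split_ifs with h
  · obtain ⟨a, ha⟩ := h
    obtain rfl : i = k * a + r := by linarith
    exact cosetExtend_apply_mul_add hk _ a
  · exact cosetExtend_apply_of_not_dvd _ h

lemma commute_scalOp_cosetProj (hk : k ≠ 0) (a : ℤ → ℝ) : Commute (scalOp a) (cosetProj k r) :=
  LinearMap.ext fun v => funext fun i => by
    simp only [Module.End.mul_apply, scalOp_apply, cosetProj_apply hk]
    split_ifs <;> simp

lemma commute_shiftZ_cosetProj (hk : k ≠ 0) {j : ℤ} (hj : k ∣ j) :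
    Commute (shiftZ j) (cosetProj k r) :=
  LinearMap.ext fun v => funext fun i => by
    have hij : k ∣ i + j - r ↔ k ∣ i - r := by
      rw [show i + j - r = i - r + j by ring]; exact dvd_add_left hj
    simp only [Module.End.mul_apply, shiftZ_apply, cosetProj_apply hk, hij]

lemma compress_mul (hk : k ≠ 0) {E : Module.End ℝ (ℤ → ℝ)} (hE : Commute E (cosetProj k r))
    (F : Module.End ℝ (ℤ → ℝ)) : compress k r (E * F) = compress k r E * compress k r F := by
  have hπ : cosetRestrict k r * cosetProj k r = cosetRestrict k r := by
    rw [cosetProj, ← mul_assoc, cosetRestrict_mul_cosetExtend hk, one_mul]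
  calc compress k r (E * F)
      = cosetRestrict k r * cosetProj k r * E * F * cosetExtend k r := by
        rw [hπ, compress_apply, mul_assoc _ E]
    _ = cosetRestrict k r * E * cosetProj k r * F * cosetExtend k r := by
        rw [mul_assoc _ _ E, ← hE.eq, ← mul_assoc]
    _ = compress k r E * compress k r F := by
        simp only [compress_apply, cosetProj, mul_assoc]

lemma mul_cosetProj (hk : k ≠ 0) {E : Module.End ℝ (ℤ → ℝ)} (hE : Commute E (cosetProj k r)) :
    E * cosetProj k r = cosetExtend k r * compress k r E * cosetRestrict k r := by
  have hP : cosetProj k r * cosetProj k r = cosetProj k r := by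
    rw [cosetProj, mul_assoc, ← mul_assoc (cosetRestrict k r), cosetRestrict_mul_cosetExtend hk,
      one_mul]
  calc E * cosetProj k r = cosetProj k r * E * cosetProj k r := by
        rw [← hE.eq, mul_assoc, hP]
    _ = cosetExtend k r * compress k r E * cosetRestrict k r := by
        simp only [compress_apply, cosetProj, mul_assoc]

lemma eq_zero_of_compress_eq_zero (hk : k ≠ 0) {E : Module.End ℝ (ℤ → ℝ)}
    (hE : ∀ r, Commute E (cosetProj k r)) (h : ∀ r, compress k r E = 0) : E = 0 :=
  LinearMap.ext fun v => funext fun i => by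
    have hi : ∀ w : ℤ → ℝ, cosetProj k i w i = w i := fun w => by simp [cosetProj_apply hk]
    calc E v i = (cosetProj k i * E) v i := (hi _).symm
      _ = 0 := by rw [← (hE i).eq, mul_cosetProj hk (hE i), h i]; simp

lemma compress_scalOp (hk : k ≠ 0) (a : ℤ → ℝ) :
    compress k r (scalOp a) = scalOp (fun i => a (k * i + r)) :=
  LinearMap.ext fun v => funext fun i => by
    simp [compress_apply, cosetExtend_apply_mul_add hk]

lemma compress_shiftZ_mul (hk : k ≠ 0) (s : ℤ) : compress k r (shiftZ (k * s)) = shiftZ s :=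
  LinearMap.ext fun v => funext fun i => by
    simp only [compress_apply, Module.End.mul_apply, cosetRestrict_apply, shiftZ_apply]
    rw [show k * i + r + k * s = k * (i + s) + r by ring, cosetExtend_apply_mul_add hk]

lemma cosetRestrict_add_mul_add (s j : ℤ) :
    cosetRestrict k (r + k * s + j) = shiftZ s * cosetRestrict k r * shiftZ j :=
  LinearMap.ext fun v => funext fun i => by
    simp only [Module.End.mul_apply, cosetRestrict_apply, shiftZ_apply]
    ring_nf

lemma cosetExtend_add_mul_add (hk : k ≠ 0) (s j : ℤ) :
    cosetExtend k (r + k * s + j) = shiftZ (-j) * cosetExtend k r * shiftZ (-s) :=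
  LinearMap.ext fun v => funext fun i => by
    simp only [Module.End.mul_apply, shiftZ_apply]
    by_cases h : k ∣ i - (r + k * s + j)
    · obtain ⟨a, ha⟩ := h
      obtain rfl : i = k * a + (r + k * s + j) := by linarith
      rw [cosetExtend_apply_mul_add hk, show k * a + (r + k * s + j) + -j = k * (a + s) + r by ring,
        cosetExtend_apply_mul_add hk, shiftZ_apply, add_neg_cancel_right]
    · rw [cosetExtend_apply_of_not_dvd _ h, cosetExtend_apply_of_not_dvd]
      rwa [show i + -j - r = i - (r + k * s + j) + k * s by ring, dvd_add_left (dvd_mul_right k s)]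

lemma compress_add_mul_add (hk : k ≠ 0) {E : Module.End ℝ (ℤ → ℝ)} {j : ℤ}
    (hE : Commute E (shiftZ j)) (s : ℤ) :
    compress k (r + k * s + j) E = shiftZ s * compress k r E * shiftZ (-s) := by
  have hj : shiftZ j * E * shiftZ (-j) = E := by
    rw [← hE.eq, mul_assoc, shiftZ_mul_shiftZ_neg, mul_one]
  conv_rhs => rw [← hj]
  simp only [compress_apply, cosetRestrict_add_mul_add, cosetExtend_add_mul_add hk, mul_assoc]

lemma compress_one (hk : k ≠ 0) : compress k r 1 = 1 := by
  rw [compress_apply, mul_one, cosetRestrict_mul_cosetExtend hk]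

lemma compress_algebraMap (hk : k ≠ 0) (c : ℝ) :
    compress k r (algebraMap ℝ _ c) = algebraMap ℝ _ c := by
  rw [Algebra.algebraMap_eq_smul_one, map_smul, compress_one hk]

end Coset

lemma exists_periodic_comp_affine {α : Type*} {g m k : ℤ} (hg : g ≠ 0) (hmk : IsCoprime m k)
    (r : ℤ) {b : ℤ → α} (hb : Periodic b m) :
    ∃ c : ℤ → α, Periodic c (m * g) ∧ ∀ i, c (k * g * i + r) = b i := by
  -- `v` inverts `k` modulo `m`
  obtain ⟨u, v, huv⟩ := hmk
  refine ⟨fun j => b (v * ((j - r) / g)), fun j => ?_, fun i => ?_⟩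
  · simp only [show j + m * g - r = j - r + m * g by ring, Int.add_mul_ediv_right _ _ hg, mul_add]
    simpa using hb.int_mul v (v * ((j - r) / g))
  · simp only [show k * g * i + r - r = g * (k * i) by ring, Int.mul_ediv_cancel_left _ hg]
    rw [show v * (k * i) = i + (-u * i) * m by linear_combination i * huv]
    simpa using hb.int_mul (-u * i) i

lemma exists_periodic_comp_affine_gcd {α : Type*} (n : ℕ) {k : ℕ} (hk : k ≠ 0) (r : ℤ) {b : ℤ → α}
    (hb : Periodic b (n / n.gcd k : ℕ)) : ∃ c : ℤ → α, Periodic c n ∧ ∀ i, c (k * i + r) = b i := by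
  obtain ⟨m, k', hcop, hn, hk'⟩ := Nat.exists_coprime n k
  have hg : n.gcd k ≠ 0 := Nat.gcd_ne_zero_right hk
  rw [Nat.div_eq_of_eq_mul_left (Nat.pos_of_ne_zero hg) hn] at hb
  obtain ⟨c, hc, hcb⟩ := exists_periodic_comp_affine (g := n.gcd k) (Nat.cast_ne_zero.2 hg)
    (Nat.isCoprime_iff_coprime.2 hcop) r hb
  refine ⟨c, ?_, ?_⟩
  · rwa [hn, Nat.cast_mul]
  · rwa [hk', Nat.cast_mul]

lemma exists_fin_gcd_add_mul_add (n : ℕ) {k : ℕ} (hk : k ≠ 0) (r : ℤ) :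
    ∃ (ρ : Fin (n.gcd k)) (s t : ℤ), r = ρ + k * s + n * t := by
  have hg : (0 : ℤ) < n.gcd k := Nat.cast_pos.2 (Nat.gcd_pos_of_pos_right n (Nat.pos_of_ne_zero hk))
  have h0 := Int.emod_nonneg r hg.ne'
  have hlt := Int.emod_lt_of_pos r hg
  refine ⟨⟨(r % n.gcd k).toNat, by omega⟩, Nat.gcdB n k * (r / n.gcd k),
    Nat.gcdA n k * (r / n.gcd k), ?_⟩
  rw [Fin.val_mk, Int.toNat_of_nonneg h0]
  linear_combination
    (Int.emod_add_mul_ediv r (n.gcd k)).symm + (r / n.gcd k) * Nat.gcd_eq_gcd_ab n k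

lemma Fin.intCast_dvd_sub_iff {g : ℕ} (ρ ρ' : Fin g) : (g : ℤ) ∣ ρ' - ρ ↔ ρ = ρ' :=
  ⟨fun h => Fin.ext ((Nat.modEq_iff_dvd.2 h).eq_of_lt_of_lt ρ.2 ρ'.2), by rintro rfl; simp⟩

lemma Subalgebra.pi_eq_top_of_single_one_mem {ι R A : Type*} [CommSemiring R] [Semiring A]
    [Algebra R A] [Fintype ι] [DecidableEq ι] {s : Set A}
    (T : Subalgebra R (ι → Algebra.adjoin R s))
    (hsingle : ∀ i, Pi.single i 1 ∈ T) (hgen : ∀ i, ∀ y ∈ s, ∃ x ∈ T, (x i : A) = y) : T = ⊤ := by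
  have key : ∀ i (y : A) (hy : y ∈ Algebra.adjoin R s), Pi.single i ⟨y, hy⟩ ∈ T := by
    intro i y hy
    induction hy using Algebra.adjoin_induction with
    | mem y hy =>
      obtain ⟨x, hx, rfl⟩ := hgen i y hy
      rw [Subtype.coe_eta, ← one_mul (x i), Pi.single_mul_left]
      exact mul_mem (hsingle i) hx
    | algebraMap c =>
      rw [show (⟨algebraMap R A c, _⟩ : Algebra.adjoin R s) = c • 1 from
        Subtype.ext (Algebra.algebraMap_eq_smul_one c), Pi.single_smul]
      exact T.smul_mem (hsingle i) c
    | add y z hy hz ihy ihz =>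
      have := add_mem ihy ihz
      rwa [← Pi.single_add] at this
    | mul y z hy hz ihy ihz =>
      have := mul_mem ihy ihz
      rwa [← Pi.single_mul] at this
  exact eq_top_iff.2 fun x _ => Finset.univ_sum_single x ▸ sum_mem fun i _ => key i _ (x i).2

namespace DOk

variable {n k : ℕ}

lemma scalOp_mem {a : ℤ → ℝ} (ha : Periodic a n) : scalOp a ∈ DOk n k :=
  Algebra.subset_adjoin (Or.inl ⟨a, ha, rfl⟩)

lemma shiftZ_mem (n k : ℕ) : shiftZ k ∈ DOk n k :=
  Algebra.subset_adjoin (Or.inr (by simp))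

lemma shiftZ_neg_mem (n k : ℕ) : shiftZ (-k) ∈ DOk n k :=
  Algebra.subset_adjoin (Or.inr (by simp))

lemma commute_of_mem {X : Module.End ℝ (ℤ → ℝ)}
    (hscal : ∀ a : ℤ → ℝ, Periodic a n → Commute (scalOp a) X)
    (hshift : ∀ s : ℤ, Commute (shiftZ (k * s)) X) {E : Module.End ℝ (ℤ → ℝ)}
    (hE : E ∈ DOk n k) : Commute E X := by
  induction hE using Algebra.adjoin_induction with
  | mem E hE =>
    rcases hE with ⟨a, ha, rfl⟩ | hE | hE
    · exact hscal a ha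
    · simpa [hE] using hshift 1
    · simpa [Set.mem_singleton_iff.1 hE] using hshift (-1)
  | algebraMap c => exact Algebra.commute_algebraMap_left c X
  | add E F _ _ hE hF => exact hE.add_left hF
  | mul E F _ _ hE hF => exact hE.mul_left hF

lemma commute_cosetProj_of_mem (hk : k ≠ 0) {E : Module.End ℝ (ℤ → ℝ)} (hE : E ∈ DOk n k)
    (r : ℤ) : Commute E (cosetProj k r) :=
  commute_of_mem (fun a _ => commute_scalOp_cosetProj (Nat.cast_ne_zero.2 hk) a)
    (fun s => commute_shiftZ_cosetProj (Nat.cast_ne_zero.2 hk) (dvd_mul_right _ s)) hE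

lemma commute_shiftZ_of_mem {E : Module.End ℝ (ℤ → ℝ)} (hE : E ∈ DOk n k) (t : ℤ) :
    Commute E (shiftZ (n * t)) :=
  commute_of_mem
    (fun a ha => commute_scalOp_shiftZ (by simpa [mul_comm] using Periodic.int_mul ha t))
    (fun s => commute_shiftZ_shiftZ _ _) hE

lemma compress_mem (hk : k ≠ 0) (r : ℤ) {E : Module.End ℝ (ℤ → ℝ)} (hE : E ∈ DOk n k) :
    compress k r E ∈ DOk (n / n.gcd k) 1 := by
  have hk' : (k : ℤ) ≠ 0 := Nat.cast_ne_zero.2 hk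
  induction hE using Algebra.adjoin_induction with
  | mem E hE =>
    rcases hE with ⟨a, ha, rfl⟩ | hE | hE
    · have hkm : k * (n / n.gcd k) = n * (k / n.gcd k) := by
        rw [← Nat.mul_div_assoc _ (Nat.gcd_dvd_left n k), mul_comm,
          Nat.mul_div_assoc _ (Nat.gcd_dvd_right n k)]
      refine compress_scalOp hk' a ▸ scalOp_mem fun i => ?_
      rw [mul_add, add_right_comm, ← Nat.cast_mul, hkm, Nat.cast_mul]
      simpa [mul_comm] using Periodic.int_mul ha (k / n.gcd k : ℕ) (k * i + r)
    · rw [hE, show compress k r (shiftZ k) = shiftZ 1 by simpa using compress_shiftZ_mul hk' 1]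
      simpa using shiftZ_mem (n / n.gcd k) 1
    · rw [Set.mem_singleton_iff.1 hE, ← mul_neg_one, compress_shiftZ_mul hk']
      simpa using shiftZ_neg_mem (n / n.gcd k) 1
  | algebraMap c =>
    rw [compress_algebraMap hk']
    exact Subalgebra.algebraMap_mem _ c
  | add _ _ _ _ hE hF =>
    rw [map_add]
    exact add_mem hE hF
  | mul E F hE _ ihE ihF =>
    rw [compress_mul hk' (commute_cosetProj_of_mem hk hE r)]
    exact mul_mem ihE ihF

variable (n) (hk : k ≠ 0)

noncomputable def compressHom (r : ℤ) : DOk n k →ₐ[ℝ] DOk (n / n.gcd k) 1 where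
  toFun E := ⟨compress k r E, compress_mem hk r E.2⟩
  map_one' := Subtype.ext (compress_one (Nat.cast_ne_zero.2 hk))
  map_mul' E F :=
    Subtype.ext (compress_mul (Nat.cast_ne_zero.2 hk) (commute_cosetProj_of_mem hk E.2 r) F)
  map_zero' := Subtype.ext (map_zero _)
  map_add' _ _ := Subtype.ext (map_add _ _ _)
  commutes' c := Subtype.ext (compress_algebraMap (Nat.cast_ne_zero.2 hk) c)

noncomputable def compressPi : DOk n k →ₐ[ℝ] (Fin (n.gcd k) → DOk (n / n.gcd k) 1) :=
  AlgHom.pi fun ρ => compressHom n hk ρ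

@[simp] lemma coe_compressPi_apply (E : DOk n k) (ρ : Fin (n.gcd k)) :
    (compressPi n hk E ρ : Module.End ℝ (ℤ → ℝ)) = compress k ρ E :=
  rfl

lemma compressPi_injective : Injective (compressPi n hk) := by
  rw [injective_iff_map_eq_zero]
  intro E hE
  have hρ (ρ : Fin (n.gcd k)) : compress k ρ E = 0 := by
    simpa using congrArg Subtype.val (congrFun hE ρ)
  refine Subtype.ext (eq_zero_of_compress_eq_zero (Nat.cast_ne_zero.2 hk)
    (commute_cosetProj_of_mem hk E.2) fun r => ?_)
  obtain ⟨ρ, s, t, rfl⟩ := exists_fin_gcd_add_mul_add n hk r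
  rw [compress_add_mul_add (Nat.cast_ne_zero.2 hk) (commute_shiftZ_of_mem E.2 t), hρ, mul_zero,
    zero_mul]

lemma single_one_mem_range (ρ : Fin (n.gcd k)) : Pi.single ρ 1 ∈ (compressPi n hk).range := by
  have hgn : (n.gcd k : ℤ) ∣ n := Int.natCast_dvd_natCast.2 (Nat.gcd_dvd_left n k)
  have hgk : (n.gcd k : ℤ) ∣ k := Int.natCast_dvd_natCast.2 (Nat.gcd_dvd_right n k)
  have hχ : Periodic (fun j : ℤ => if (n.gcd k : ℤ) ∣ j - ρ then (1 : ℝ) else 0) n := fun j => by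
    simp only [show j + n - ρ = j - ρ + n by ring, dvd_add_left hgn]
  refine ⟨⟨_, scalOp_mem hχ⟩, funext fun ρ' => Subtype.ext ?_⟩
  have hcoset (i : ℤ) : (n.gcd k : ℤ) ∣ k * i + ρ' - ρ ↔ ρ = ρ' := by
    rw [show (k : ℤ) * i + ρ' - ρ = ρ' - ρ + k * i by ring,
      dvd_add_left (dvd_mul_of_dvd_left hgk i), Fin.intCast_dvd_sub_iff]
  change compress k ρ' _ = _
  rw [compress_scalOp (Nat.cast_ne_zero.2 hk)]
  simp only [hcoset, Pi.single_apply, eq_comm (a := ρ'), scalOp_const]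
  split_ifs <;> simp

lemma compressPi_surjective : Surjective (compressPi n hk) := by
  rw [← AlgHom.range_eq_top]
  refine Subalgebra.pi_eq_top_of_single_one_mem _ (single_one_mem_range n hk) ?_
  rintro ρ y (⟨b, hb, rfl⟩ | rfl | hy)
  · obtain ⟨c, hc, hcb⟩ := exists_periodic_comp_affine_gcd n hk ρ hb
    exact ⟨_, ⟨⟨_, scalOp_mem hc⟩, rfl⟩, by
      simp [compress_scalOp (Nat.cast_ne_zero.2 hk), hcb]⟩
  · exact ⟨_, ⟨⟨_, shiftZ_mem n k⟩, rfl⟩, by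
      simpa using compress_shiftZ_mul (Nat.cast_ne_zero.2 hk) 1⟩
  · rw [Set.mem_singleton_iff.1 hy]
    exact ⟨_, ⟨⟨_, shiftZ_neg_mem n k⟩, rfl⟩, by
      simpa using compress_shiftZ_mul (Nat.cast_ne_zero.2 hk) (-1)⟩

end DOk

theorem DOk_iso_product_general (n k : ℕ) (hk : 1 ≤ k) :
    Nonempty (↥(DOk n k) ≃ₐ[ℝ] (Fin (Nat.gcd n k) → ↥(DOk (n / Nat.gcd n k) 1))) ∧
    (Nat.gcd n k = 1 → Nonempty (↥(DOk n k) ≃ₐ[ℝ] ↥(DOk n 1))) := by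
  have hk0 : k ≠ 0 := by omega
  have e : DOk n k ≃ₐ[ℝ] (Fin (n.gcd k) → DOk (n / n.gcd k) 1) :=
    .ofBijective (DOk.compressPi n hk0)
      ⟨DOk.compressPi_injective n hk0, DOk.compressPi_surjective n hk0⟩
  refine ⟨⟨e⟩, fun h => ?_⟩
  rw [h, Nat.div_one] at e
  exact ⟨e.trans (AlgEquiv.funUnique ℝ (Fin 1) _)⟩

/-- With `g = gcd(n,k)`, the algebra `DO_n(kℤ)` is isomorphic as an associative
`ℝ`-algebra to the `g`-fold direct product of the algebra `DO_{n/g}`; in particular,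
if `gcd(n,k) = 1`, then `DO_n(kℤ) ≅ DO_n`. -/
theorem DOk_iso_product (n k : ℕ) (hn : 1 ≤ n) (hk : 1 ≤ k) :
    Nonempty (↥(DOk n k) ≃ₐ[ℝ] (Fin (Nat.gcd n k) → ↥(DOk (n / Nat.gcd n k) 1))) ∧
    (Nat.gcd n k = 1 → Nonempty (↥(DOk n k) ≃ₐ[ℝ] ↥(DOk n 1))) :=
  DOk_iso_product_general n k hk
end
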